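/- arXiv:1810.03105 — 3 statements merged into one kernel-verified Lean document; each statement's English description precedes it below -/
import Mathlib

section
/- If ω_0 ≤ 1 and for all s ≥ 1, ω_s = (√(ω_{s-1}⁴ + 4ω_{s-1}²) - ω_{s-1}²)/2 with each ω_{s-1} > 0, then ω_s ≤ 2/(s+2) for all s ≥ 0. -/
/-! In the reciprocals `x_s = 1 / ω_s` the recursion reads `x_s² - x_s = x_{s-1}²`. Since
`x ↦ x² - x` is increasing on `[1/2, ∞)` and `((c + 1)/2)² - (c + 1)/2 < (c/2)²`, the bound
`x_{s-1} ≥ (s + 1)/2` propagates to `x_s ≥ (s + 2)/2`. -/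

lemma sq_add_sq_mul_eq_sq_of_eq_sqrt {a b : ℝ}
    (h : b = (Real.sqrt (a ^ 4 + 4 * a ^ 2) - a ^ 2) / 2) : b ^ 2 + a ^ 2 * b = a ^ 2 := by
  have hsq : Real.sqrt (a ^ 4 + 4 * a ^ 2) ^ 2 = a ^ 4 + 4 * a ^ 2 :=
    Real.sq_sqrt (by positivity)
  rw [h]
  linear_combination hsq / 4

lemma inv_sq_sub_inv_eq_inv_sq {a b : ℝ} (ha : a ≠ 0) (hb : b ≠ 0)
    (h : b ^ 2 + a ^ 2 * b = a ^ 2) : b⁻¹ ^ 2 - b⁻¹ = a⁻¹ ^ 2 := by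
  field_simp
  linear_combination -h

lemma add_one_div_two_le_of_sq_sub_self_eq_sq {x y c : ℝ} (hx : 0 < x) (hc : 0 ≤ c)
    (hy : c / 2 ≤ y) (h : x ^ 2 - x = y ^ 2) : (c + 1) / 2 ≤ x := by
  have hx1 : 1 ≤ x := by nlinarith [sq_nonneg y]
  by_contra! hlt
  have hy2 : c ^ 2 / 4 ≤ y ^ 2 := by nlinarith
  nlinarith

lemma le_two_div_add_one_of_sq_add_sq_mul_eq_sq {a b c : ℝ} (ha : 0 < a) (hb : 0 < b)
    (hc : 0 < c) (hab : b ^ 2 + a ^ 2 * b = a ^ 2) (h : a ≤ 2 / c) : b ≤ 2 / (c + 1) := by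
  have hinv := inv_sq_sub_inv_eq_inv_sq ha.ne' hb.ne' hab
  have hy : c / 2 ≤ a⁻¹ := by rwa [le_inv_comm₀ (by positivity) ha, inv_div]
  have hx := add_one_div_two_le_of_sq_sub_self_eq_sq (inv_pos.mpr hb) hc.le hy hinv
  rwa [le_inv_comm₀ (by positivity) hb, inv_div] at hx

theorem stmt1 (ω : ℕ → ℝ) (hpos : ∀ s, 0 < ω s) (h01 : ω 0 ≤ 1)
    (hrec : ∀ s : ℕ, 1 ≤ s →
      ω s = (Real.sqrt ((ω (s - 1)) ^ 4 + 4 * (ω (s - 1)) ^ 2) - (ω (s - 1)) ^ 2) / 2) :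
    ∀ s : ℕ, ω s ≤ 2 / ((s : ℝ) + 2) := by
  intro s
  induction s with
  | zero => norm_num [h01]
  | succ n ih =>
    have hstep := sq_add_sq_mul_eq_sq_of_eq_sqrt (hrec (n + 1) n.succ_pos)
    rw [Nat.add_sub_cancel] at hstep
    have h := le_two_div_add_one_of_sq_add_sq_mul_eq_sq (hpos n) (hpos (n + 1))
      (by positivity) hstep ih
    rw [Nat.cast_succ, add_right_comm]
    exact h
end

section
/- Let f_1, ..., f_n : ℝ^d → ℝ be convex and differentiable with each f_i having L_i-Lipschitz gradient, let p_1, ..., p_n > 0 sum to 1, set f = (1/n)∑_i f_i and L̃ = max_j L_j/(n p_j). Fix points x, x̃ ∈ ℝ^d, and let the random index i be drawn with P(i = j) = p_j. Define the estimator g_i = [∇f_i(x) - ∇f_i(x̃)]/(n p_i) + ∇f(x̃). Then E[‖g_i - ∇f(x)‖²] ≤ 2L̃ (f(x̃) - f(x) + ⟨∇f(x), x - x̃⟩). -/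
/-!
With `v i = (n p_i)⁻¹ • (∇f_i x - ∇f_i x̃)`, the estimator minus its mean is `v i - 𝔼 v`, so its
second moment is at most `𝔼 ‖v‖² = ∑ (n² p_i)⁻¹ ‖∇f_i x - ∇f_i x̃‖²`. Co-coercivity of the gradient
of a convex function with `L_i`-Lipschitz gradient (first-order convexity at `x` combined with the
descent lemma at a gradient step) bounds `‖∇f_i x - ∇f_i x̃‖²` by `2 L_i` times the Bregman gap
`f_i x̃ - f_i x - ⟪∇f_i x, x̃ - x⟫ ≥ 0`; pulling out `max_j L_j / (n p_j)` and averaging the gaps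
gives the bound.
-/

open RealInnerProductSpace

section Smooth

variable {E : Type*} [NormedAddCommGroup E] [InnerProductSpace ℝ E] [CompleteSpace E] {g : E → ℝ}

lemma hasDerivAt_comp_add_smul_sub {u w : E} {t : ℝ}
    (hg : DifferentiableAt ℝ g (u + t • (w - u))) :
    HasDerivAt (fun s : ℝ => g (u + s • (w - u))) ⟪gradient g (u + t • (w - u)), w - u⟫ t := by
  have hline : HasDerivAt (fun s : ℝ => u + s • (w - u)) (w - u) t := by
    simpa using ((hasDerivAt_id t).smul_const (w - u)).const_add u
  have := hg.hasFDerivAt.comp_hasDerivAt t hline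
  rwa [← inner_gradient_left] at this

lemma ConvexOn.add_inner_gradient_le (hconv : ConvexOn ℝ Set.univ g) {u : E}
    (hg : DifferentiableAt ℝ g u) (w : E) :
    g u + ⟪gradient g u, w - u⟫ ≤ g w := by
  have hline : ConvexOn ℝ Set.univ (fun s : ℝ => g (u + s • (w - u))) := by
    simpa [Function.comp_def, AffineMap.lineMap_apply, add_comm]
      using hconv.comp_affineMap (AffineMap.lineMap u w)
  have hderiv := hasDerivAt_comp_add_smul_sub (t := 0) (w := w) (by rwa [zero_smul, add_zero])
  have := hline.le_slope_of_hasDerivAt (Set.mem_univ 0) (Set.mem_univ 1) one_pos hderiv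
  simp only [slope_def_field, zero_smul, one_smul, add_zero, add_sub_cancel, sub_zero,
    div_one] at this
  linarith

lemma le_add_inner_gradient_add_sq (hg : Differentiable ℝ g) {K : ℝ}
    (hLip : ∀ a b, ‖gradient g a - gradient g b‖ ≤ K * ‖a - b‖) (u w : E) :
    g w ≤ g u + ⟪gradient g u, w - u⟫ + K / 2 * ‖w - u‖ ^ 2 := by
  set ψ : ℝ → ℝ := fun t =>
    g (u + t • (w - u)) - t * ⟪gradient g u, w - u⟫ - K / 2 * t ^ 2 * ‖w - u‖ ^ 2
  have hψ : ∀ t, HasDerivAt ψ (⟪gradient g (u + t • (w - u)) - gradient g u, w - u⟫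
      - K * t * ‖w - u‖ ^ 2) t := by
    intro t
    have := ((hasDerivAt_comp_add_smul_sub (hg (u + t • (w - u)))).sub
      ((hasDerivAt_id t).mul_const ⟪gradient g u, w - u⟫)).sub
      (((hasDerivAt_pow 2 t).const_mul (K / 2)).mul_const (‖w - u‖ ^ 2))
    refine this.congr_deriv ?_
    rw [inner_sub_left]
    ring
  have hψ'_nonpos : ∀ t ∈ interior (Set.Ici (0 : ℝ)),
      ⟪gradient g (u + t • (w - u)) - gradient g u, w - u⟫ - K * t * ‖w - u‖ ^ 2 ≤ 0 := by
    intro t ht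
    rw [interior_Ici, Set.mem_Ioi] at ht
    have hstep : ‖gradient g (u + t • (w - u)) - gradient g u‖ ≤ K * (t * ‖w - u‖) := by
      simpa [norm_smul, abs_of_pos ht] using hLip (u + t • (w - u)) u
    nlinarith [real_inner_le_norm (gradient g (u + t • (w - u)) - gradient g u) (w - u),
      norm_nonneg (w - u)]
  have hanti := antitoneOn_of_hasDerivWithinAt_nonpos (convex_Ici 0)
    (fun t _ => (hψ t).continuousAt.continuousWithinAt)
    (fun t _ => (hψ t).hasDerivWithinAt) hψ'_nonpos
  have := hanti Set.self_mem_Ici (show (1 : ℝ) ∈ Set.Ici 0 by norm_num) zero_le_one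
  simp only [ψ, zero_smul, one_smul, add_zero, add_sub_cancel, zero_mul, one_mul, sub_zero,
    ne_eq, OfNat.ofNat_ne_zero, not_false_eq_true, zero_pow, one_pow, mul_zero] at this
  linarith

lemma ConvexOn.norm_sub_gradient_sq_le (hconv : ConvexOn ℝ Set.univ g) (hg : Differentiable ℝ g)
    {K : ℝ} (hK : 0 < K) (hLip : ∀ a b, ‖gradient g a - gradient g b‖ ≤ K * ‖a - b‖) (u w : E) :
    ‖gradient g u - gradient g w‖ ^ 2 ≤ 2 * K * (g u - g w - ⟪gradient g w, u - w⟫) := by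
  set G := gradient g u - gradient g w
  -- bound `g` at the gradient step `y` from `u` below via convexity at `w`, above via descent at `u`
  set y := u - K⁻¹ • G
  have hlower := hconv.add_inner_gradient_le (hg w) y
  have hupper := le_add_inner_gradient_add_sq hg hLip u y
  have hyw : y - w = (u - w) - K⁻¹ • G := by simp only [y]; abel
  have hyu : y - u = -(K⁻¹ • G) := by simp only [y]; abel
  rw [hyw, inner_sub_right, real_inner_smul_right] at hlower
  rw [hyu, inner_neg_right, real_inner_smul_right, norm_neg, norm_smul, Real.norm_eq_abs,
    abs_of_pos (inv_pos.2 hK)] at hupper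
  have hG : ⟪gradient g u, G⟫ - ⟪gradient g w, G⟫ = ‖G‖ ^ 2 := by
    rw [← inner_sub_left, real_inner_self_eq_norm_sq]
  have key : K⁻¹ * ‖G‖ ^ 2 ≤ 2 * (g u - g w - ⟪gradient g w, u - w⟫) := by
    have hsq : K / 2 * (K⁻¹ * ‖G‖) ^ 2 = K⁻¹ * ‖G‖ ^ 2 / 2 := by field_simp
    have hcross : K⁻¹ * ⟪gradient g u, G⟫ - K⁻¹ * ⟪gradient g w, G⟫ = K⁻¹ * ‖G‖ ^ 2 := by
      rw [← mul_sub, hG]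
    linarith
  calc ‖G‖ ^ 2 = K * (K⁻¹ * ‖G‖ ^ 2) := by field_simp
    _ ≤ K * (2 * (g u - g w - ⟪gradient g w, u - w⟫)) := by gcongr
    _ = _ := by ring

end Smooth

lemma gradient_const_mul_sum {E ι : Type*} [NormedAddCommGroup E] [InnerProductSpace ℝ E]
    [CompleteSpace E] {s : Finset ι} {f : ι → E → ℝ} {z : E}
    (hf : ∀ j ∈ s, DifferentiableAt ℝ (f j) z) (c : ℝ) :
    gradient (fun y => c * ∑ j ∈ s, f j y) z = c • ∑ j ∈ s, gradient (f j) z := by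
  have hderiv : HasFDerivAt (fun y => c * ∑ j ∈ s, f j y) (c • ∑ j ∈ s, fderiv ℝ (f j) z) z :=
    (HasFDerivAt.fun_sum fun j hj => (hf j hj).hasFDerivAt).const_mul c
  rw [hderiv.hasGradientAt.gradient]
  simp [gradient, map_smul, map_sum]

lemma sum_mul_norm_sub_sum_smul_sq {E ι : Type*} [NormedAddCommGroup E] [InnerProductSpace ℝ E]
    {s : Finset ι} {p : ι → ℝ} (hp : ∑ i ∈ s, p i = 1) (v : ι → E) :
    ∑ i ∈ s, p i * ‖v i - ∑ j ∈ s, p j • v j‖ ^ 2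
      = ∑ i ∈ s, p i * ‖v i‖ ^ 2 - ‖∑ j ∈ s, p j • v j‖ ^ 2 := by
  set m := ∑ j ∈ s, p j • v j
  have hcross : ∑ i ∈ s, p i * ⟪v i, m⟫ = ‖m‖ ^ 2 := by
    simp only [← real_inner_smul_left, ← sum_inner, m, real_inner_self_eq_norm_sq]
  simp only [norm_sub_sq_real, mul_add, mul_sub, Finset.sum_add_distrib, Finset.sum_sub_distrib]
  rw [← Finset.sum_mul, hp]
  simp only [mul_left_comm _ (2 : ℝ), ← Finset.mul_sum, hcross]
  ring

lemma sum_mul_norm_inv_smul_sub_mean_sq_le {E ι : Type*} [NormedAddCommGroup E]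
    [InnerProductSpace ℝ E] {s : Finset ι} {p K B : ι → ℝ} {a : ι → E} {c M : ℝ} (hc : 0 < c)
    (hp : ∀ i ∈ s, 0 < p i) (hp1 : ∑ i ∈ s, p i = 1)
    (ha : ∀ i ∈ s, ‖a i‖ ^ 2 ≤ 2 * K i * B i) (hB : ∀ i ∈ s, 0 ≤ B i)
    (hM : ∀ i ∈ s, K i / (c * p i) ≤ M) :
    ∑ i ∈ s, p i * ‖(c * p i)⁻¹ • a i - c⁻¹ • ∑ j ∈ s, a j‖ ^ 2
      ≤ 2 * M * (c⁻¹ * ∑ i ∈ s, B i) := by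
  have hmean : ∑ j ∈ s, p j • (c * p j)⁻¹ • a j = c⁻¹ • ∑ j ∈ s, a j := by
    rw [Finset.smul_sum]
    refine Finset.sum_congr rfl fun j hj => ?_
    rw [smul_smul]
    congr 1
    field_simp [(hp j hj).ne']
  have hterm : ∀ i ∈ s, p i * ‖(c * p i)⁻¹ • a i‖ ^ 2 ≤ 2 * M * c⁻¹ * B i := by
    intro i hi
    have hpi := hp i hi
    calc p i * ‖(c * p i)⁻¹ • a i‖ ^ 2 = c⁻¹ * (c * p i)⁻¹ * ‖a i‖ ^ 2 := by
          rw [norm_smul, mul_pow, Real.norm_eq_abs, sq_abs]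
          field_simp
      _ ≤ c⁻¹ * (c * p i)⁻¹ * (2 * K i * B i) := by gcongr; exact ha i hi
      _ = 2 * c⁻¹ * (K i / (c * p i)) * B i := by ring
      _ ≤ 2 * c⁻¹ * M * B i := by gcongr; exacts [hB i hi, hM i hi]
      _ = 2 * M * c⁻¹ * B i := by ring
  rw [← hmean, sum_mul_norm_sub_sum_smul_sq hp1]
  calc _ ≤ ∑ i ∈ s, p i * ‖(c * p i)⁻¹ • a i‖ ^ 2 := sub_le_self _ (sq_nonneg _)
    _ ≤ ∑ i ∈ s, 2 * M * c⁻¹ * B i := Finset.sum_le_sum hterm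
    _ = 2 * M * (c⁻¹ * ∑ i ∈ s, B i) := by rw [← Finset.mul_sum]; ring

theorem stmt5 {d n : ℕ} (hn : 0 < n)
    (f : Fin n → EuclideanSpace ℝ (Fin d) → ℝ) (L p : Fin n → ℝ)
    (hconv : ∀ i, ConvexOn ℝ Set.univ (f i))
    (hdiff : ∀ i, Differentiable ℝ (f i))
    (hLpos : ∀ i, 0 < L i)
    (hLip : ∀ i x y, ‖gradient (f i) x - gradient (f i) y‖ ≤ L i * ‖x - y‖)
    (hp : ∀ i, 0 < p i) (hp1 : ∑ i, p i = 1)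
    (x xt : EuclideanSpace ℝ (Fin d)) :
    ∑ i, p i *
        ‖((1 / ((n : ℝ) * p i)) • (gradient (f i) x - gradient (f i) xt)
            + gradient (fun y => (1 / (n : ℝ)) * ∑ j, f j y) xt)
          - gradient (fun y => (1 / (n : ℝ)) * ∑ j, f j y) x‖ ^ 2
      ≤ 2 * (Finset.univ.sup' ⟨⟨0, hn⟩, Finset.mem_univ _⟩ fun j => L j / ((n : ℝ) * p j)) *
          ((1 / (n : ℝ)) * ∑ j, f j xt - (1 / (n : ℝ)) * ∑ j, f j x
            + ⟪gradient (fun y => (1 / (n : ℝ)) * ∑ j, f j y) x, x - xt⟫) := by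
  have hgrad : ∀ z, gradient (fun y => (1 / (n : ℝ)) * ∑ j, f j y) z
      = (n : ℝ)⁻¹ • ∑ j, gradient (f j) z := fun z => by
    rw [gradient_const_mul_sum (fun j _ => hdiff j z), one_div]
  set a := fun i => gradient (f i) x - gradient (f i) xt
  set B := fun i => f i xt - f i x - ⟪gradient (f i) x, xt - x⟫
  have hestimator : ∀ i, (1 / ((n : ℝ) * p i)) • (gradient (f i) x - gradient (f i) xt)
      + gradient (fun y => (1 / (n : ℝ)) * ∑ j, f j y) xt
      - gradient (fun y => (1 / (n : ℝ)) * ∑ j, f j y) x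
      = ((n : ℝ) * p i)⁻¹ • a i - (n : ℝ)⁻¹ • ∑ j, a j := fun i => by
    rw [hgrad, hgrad, one_div, Finset.sum_sub_distrib]
    module
  have hgap : (1 / (n : ℝ)) * ∑ j, f j xt - (1 / (n : ℝ)) * ∑ j, f j x
      + ⟪gradient (fun y => (1 / (n : ℝ)) * ∑ j, f j y) x, x - xt⟫ = (n : ℝ)⁻¹ * ∑ i, B i := by
    rw [hgrad, real_inner_smul_left, sum_inner, ← neg_sub xt x]
    simp only [B, Finset.sum_sub_distrib, one_div, inner_neg_right, Finset.sum_neg_distrib]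
    ring
  simp_rw [hestimator, hgap]
  refine sum_mul_norm_inv_smul_sub_mean_sq_le (Nat.cast_pos.2 hn) (fun i _ => hp i) hp1
    (fun i _ => ?_) (fun i _ => ?_) (fun i _ => Finset.le_sup' (fun j => L j / ((n : ℝ) * p j)) (Finset.mem_univ i))
  · rw [norm_sub_rev]
    exact (hconv i).norm_sub_gradient_sq_le (hdiff i) (hLpos i) (hLip i) xt x
  · linarith [(hconv i).add_inner_gradient_le (hdiff i x) xt]
end

section
/- Under the hypotheses of the telescoping recursion with ω_0 = 1 - 1/(α-1) for some α > 2 and ω_{S-1} ≤ 2/(S+1), one has Δ_S ≤ 4(α-1)/((α-2)²(S+1)²) · Δ_0 + 4c/(S+1)² · Λ_0. -/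
/-!
The potential `L s = (1 - ω s) / ω s ^ 2 * Δ s + c * Λ s` does not increase: dividing the
recursion for `Δ (s + 1)` by `ω s ^ 2` bounds `Δ (s + 1) / ω s ^ 2 + c * Λ (s + 1)` by `L s`, and
the identity `(1 - ω (s + 1)) / ω (s + 1) ^ 2 = 1 / ω s ^ 2` says that this quantity is
`L (s + 1)`. Hence, as `Λ S ≥ 0`, `Δ S ≤ ω (S - 1) ^ 2 * L 0`, and `ω (S - 1) ≤ 2 / (S + 1)` gives the rate.
-/

noncomputable def lyapunov (Δ Λ ω : ℕ → ℝ) (c : ℝ) (s : ℕ) : ℝ :=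
  (1 - ω s) / ω s ^ 2 * Δ s + c * Λ s

lemma div_sq_add_le_of_le {Δ Δ' Λ Λ' ω c : ℝ} (hω : 0 < ω)
    (h : Δ' ≤ (1 - ω) * Δ + c * ω ^ 2 * (Λ - Λ')) :
    Δ' / ω ^ 2 + c * Λ' ≤ (1 - ω) / ω ^ 2 * Δ + c * Λ := by
  calc Δ' / ω ^ 2 + c * Λ' ≤ ((1 - ω) * Δ + c * ω ^ 2 * (Λ - Λ')) / ω ^ 2 + c * Λ' := by
        gcongr
    _ = (1 - ω) / ω ^ 2 * Δ + c * Λ := by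
        field_simp
        ring

lemma div_sq_add_le_lyapunov_zero {S : ℕ} {Δ Λ ω : ℕ → ℝ} {c : ℝ}
    (hω : ∀ s < S, 0 < ω s)
    (hrec : ∀ s < S, Δ (s + 1) ≤ (1 - ω s) * Δ s + c * ω s ^ 2 * (Λ s - Λ (s + 1)))
    (hid : ∀ s, s + 1 < S → (1 - ω (s + 1)) / ω (s + 1) ^ 2 = 1 / ω s ^ 2) :
    ∀ s < S, Δ (s + 1) / ω s ^ 2 + c * Λ (s + 1) ≤ lyapunov Δ Λ ω c 0
  | 0, h0 => div_sq_add_le_of_le (hω 0 h0) (hrec 0 h0)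
  | s + 1, hs => calc
      Δ (s + 2) / ω (s + 1) ^ 2 + c * Λ (s + 2) ≤ lyapunov Δ Λ ω c (s + 1) :=
        div_sq_add_le_of_le (hω (s + 1) hs) (hrec (s + 1) hs)
      _ = Δ (s + 1) / ω s ^ 2 + c * Λ (s + 1) := by
        rw [lyapunov, hid s hs, one_div_mul_eq_div]
      _ ≤ lyapunov Δ Λ ω c 0 := div_sq_add_le_lyapunov_zero hω hrec hid s (by omega)

lemma one_sub_div_sq_of_eq_one_sub_inv {α ω : ℝ} (hα : 2 < α) (hω : ω = 1 - 1 / (α - 1)) :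
    (1 - ω) / ω ^ 2 = (α - 1) / (α - 2) ^ 2 := by
  have hα1 : α - 1 ≠ 0 := by linarith
  have hα2 : α - 2 ≠ 0 := by linarith
  have : ω = (α - 2) / (α - 1) := by
    rw [hω]
    field_simp
    ring
  rw [this]
  field_simp
  ring

theorem stmt16_general (S : ℕ) (hS : 1 ≤ S) (Δ Λ ω : ℕ → ℝ) (c : ℝ) (hc : 0 < c)
    (hΔ : ∀ s ≤ S, 0 ≤ Δ s) (hΛ : ∀ s ≤ S, 0 ≤ Λ s)
    (hω : ∀ s < S, 0 < ω s ∧ ω s ≤ 1)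
    (hrec : ∀ s : ℕ, 1 ≤ s → s ≤ S →
      Δ s ≤ (1 - ω (s - 1)) * Δ (s - 1) + c * (ω (s - 1)) ^ 2 * (Λ (s - 1) - Λ s))
    (hid : ∀ s : ℕ, 1 ≤ s → s < S → (1 - ω s) / (ω s) ^ 2 = 1 / (ω (s - 1)) ^ 2)
    (α : ℝ) (hα : 2 < α) (hω0 : ω 0 = 1 - 1 / (α - 1))
    (hωS : ω (S - 1) ≤ 2 / ((S : ℝ) + 1)) :
    Δ S ≤ 4 * (α - 1) / ((α - 2) ^ 2 * ((S : ℝ) + 1) ^ 2) * Δ 0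
        + 4 * c / ((S : ℝ) + 1) ^ 2 * Λ 0 := by
  obtain ⟨n, rfl⟩ : ∃ n, S = n + 1 := ⟨S - 1, by omega⟩
  have hωn : 0 < ω n := (hω n n.lt_add_one).1
  have hpot := div_sq_add_le_lyapunov_zero (fun s hs => (hω s hs).1)
    (fun s hs => by simpa using hrec (s + 1) (by omega) (by omega))
    (fun s hs => by simpa using hid (s + 1) (by omega) hs) n n.lt_add_one
  rw [lyapunov, one_sub_div_sq_of_eq_one_sub_inv hα hω0] at hpot
  have hL0 : 0 ≤ (α - 1) / (α - 2) ^ 2 * Δ 0 + c * Λ 0 := by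
    have := hΔ 0 (by omega)
    have := hΛ 0 (by omega)
    have : 0 ≤ α - 1 := by linarith
    positivity
  have hωsq : ω n ^ 2 ≤ (2 / ((n : ℝ) + 2)) ^ 2 := by
    refine pow_le_pow_left₀ hωn.le ?_ 2
    simpa [add_assoc, one_add_one_eq_two] using hωS
  calc Δ (n + 1) ≤ ω n ^ 2 * ((α - 1) / (α - 2) ^ 2 * Δ 0 + c * Λ 0) := by
        rw [← div_le_iff₀' (by positivity)]
        linarith [mul_nonneg hc.le (hΛ (n + 1) le_rfl)]
    _ ≤ (2 / ((n : ℝ) + 2)) ^ 2 * ((α - 1) / (α - 2) ^ 2 * Δ 0 + c * Λ 0) := by gcongr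
    _ = _ := by
      have : (n : ℝ) + 2 ≠ 0 := by positivity
      have : α - 2 ≠ 0 := by linarith
      push_cast
      field_simp
      ring

theorem stmt16 (S : ℕ) (hS : 1 ≤ S) (Δ Λ ω : ℕ → ℝ) (c : ℝ) (hc : 0 < c)
    (hΔ : ∀ s ≤ S, 0 ≤ Δ s) (hΛ : ∀ s ≤ S, 0 ≤ Λ s)
    (hΛmono : ∀ s t : ℕ, s ≤ t → t ≤ S → Λ t ≤ Λ s)
    (hω : ∀ s < S, 0 < ω s ∧ ω s ≤ 1)
    (hrec : ∀ s : ℕ, 1 ≤ s → s ≤ S →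
      Δ s ≤ (1 - ω (s - 1)) * Δ (s - 1) + c * (ω (s - 1)) ^ 2 * (Λ (s - 1) - Λ s))
    (hid : ∀ s : ℕ, 1 ≤ s → s < S → (1 - ω s) / (ω s) ^ 2 = 1 / (ω (s - 1)) ^ 2)
    (α : ℝ) (hα : 2 < α) (hω0 : ω 0 = 1 - 1 / (α - 1))
    (hωS : ω (S - 1) ≤ 2 / ((S : ℝ) + 1)) :
    Δ S ≤ 4 * (α - 1) / ((α - 2) ^ 2 * ((S : ℝ) + 1) ^ 2) * Δ 0
        + 4 * c / ((S : ℝ) + 1) ^ 2 * Λ 0 :=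
  stmt16_general S hS Δ Λ ω c hc hΔ hΛ hω hrec hid α hα hω0 hωS
end
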